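/- The natural density of squarefree integers is 6/π²: if Qₙ denotes the proportion of integers in {1, …, n} that are squarefree (not divisible by the square of any integer greater than 1), i.e., Qₙ = #{x ∈ {1,…,n} : x squarefree} / n, then Qₙ → 6/π² as n → ∞. -/

import Mathlib

open Filter Topology Real Finset ArithmeticFunction
open scoped ArithmeticFunction.Moebius ArithmeticFunction.zeta

/-!
Writing `x = b² a` with `a` squarefree, `d² ∣ x ↔ d ∣ b`, so `∑_{d² ∣ x} μ d = ∑_{d ∣ b} μ d` is the
indicator of `x` being squarefree. Summing over `x ≤ n` and swapping the sums,
`#{x ≤ n squarefree} = ∑_{d ≤ n} μ d ⌊n / d²⌋`. After dividing by `n`, the `d`-th term tends to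
`μ d / d²` and is bounded by `1 / d²`, so by dominated convergence (Tannery's theorem) the
density is `∑ μ d / d² = 1 / ζ 2 = 6 / π²`.
-/

namespace Nat

theorem sq_dvd_sq_mul_iff_dvd_of_squarefree {a b d : ℕ} (hb : b ≠ 0) (ha : Squarefree a) :
    d ^ 2 ∣ b ^ 2 * a ↔ d ∣ b := by
  refine ⟨fun h => ?_, fun h => (pow_dvd_pow_of_dvd h 2).mul_right a⟩
  have hx : b ^ 2 * a ≠ 0 := mul_ne_zero (pow_ne_zero 2 hb) ha.ne_zero
  have hd : d ≠ 0 := by rintro rfl; exact hx (by simpa using h)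
  rw [← factorization_le_iff_dvd (pow_ne_zero 2 hd) hx, factorization_mul (pow_ne_zero 2 hb)
    ha.ne_zero, factorization_pow, factorization_pow] at h
  rw [← factorization_le_iff_dvd hd hb]
  intro p
  have hdp := h p
  have hap := ha.natFactorization_le_one p
  simp only [Finsupp.coe_add, Finsupp.coe_smul, Pi.add_apply, Pi.smul_apply, smul_eq_mul] at hdp
  omega

theorem cast_div_div_self_le {α : Type*} [Semifield α] [LinearOrder α] [IsStrictOrderedRing α]
    (n k : ℕ) : ((n / k : ℕ) : α) / n ≤ (k : α)⁻¹ := by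
  rcases eq_or_ne n 0 with rfl | hn
  · simp
  calc ((n / k : ℕ) : α) / n ≤ (n / k : α) / n := by gcongr; exact cast_div_le
    _ = (k : α)⁻¹ := by field_simp

theorem tendsto_cast_div_div_self (k : ℕ) :
    Tendsto (fun n : ℕ => ((n / k : ℕ) : ℝ) / n) atTop (𝓝 (k : ℝ)⁻¹) := by
  have := (tendsto_nat_floor_mul_div_atTop (R := ℝ) (inv_nonneg.mpr k.cast_nonneg)).comp
    tendsto_natCast_atTop_atTop
  refine this.congr fun n => ?_
  simp [inv_mul_eq_div, floor_div_eq_div]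

end Nat

namespace ArithmeticFunction

theorem sum_divisors_moebius (n : ℕ) : ∑ d ∈ n.divisors, μ d = if n = 1 then 1 else 0 := by
  have := congr($moebius_mul_coe_zeta n)
  rwa [coe_mul_zeta_apply, one_apply] at this

theorem sum_moebius_filter_sq_dvd {x n : ℕ} (hx : x ≠ 0) (hxn : x ≤ n) :
    ∑ d ∈ Icc 1 n with d ^ 2 ∣ x, μ d = if Squarefree x then 1 else 0 := by
  obtain ⟨a, b, rfl, ha⟩ := Nat.sq_mul_squarefree x
  have hb : b ≠ 0 := by rintro rfl; simp at hx
  have hdivisors : {d ∈ Icc 1 n | d ^ 2 ∣ b ^ 2 * a} = b.divisors := by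
    ext d
    simp only [mem_filter, mem_Icc, Nat.mem_divisors, Nat.sq_dvd_sq_mul_iff_dvd_of_squarefree hb ha]
    refine ⟨fun h => ⟨h.2, hb⟩, fun ⟨hdb, _⟩ => ⟨⟨Nat.pos_of_dvd_of_pos hdb (by omega), ?_⟩, hdb⟩⟩
    calc d ≤ b := Nat.le_of_dvd (by omega) hdb
      _ ≤ b ^ 2 * a :=
        (Nat.le_self_pow two_ne_zero b).trans (Nat.le_mul_of_pos_right _ ha.ne_zero.bot_lt)
      _ ≤ n := hxn
  have hsquarefree : Squarefree (b ^ 2 * a) ↔ b = 1 :=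
    ⟨fun h => Nat.isUnit_iff.mp (h b (Dvd.intro a (by ring))), by rintro rfl; simpa using ha⟩
  rw [hdivisors, sum_divisors_moebius]
  exact if_congr hsquarefree.symm rfl rfl

theorem LSeries_moebius_eq_inv_riemannZeta {s : ℂ} (hs : 1 < s.re) :
    LSeries (fun n => (μ n : ℂ)) s = (riemannZeta s)⁻¹ := by
  rw [← LSeries_zeta_eq_riemannZeta hs]
  exact eq_inv_of_mul_eq_one_right (LSeries_zeta_mul_Lseries_moebius hs)

theorem tsum_moebius_div_sq : ∑' d : ℕ, (μ d : ℝ) / d ^ 2 = 6 / π ^ 2 := by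
  have h := LSeries_moebius_eq_inv_riemannZeta (s := 2) (by norm_num)
  rw [riemannZeta_two, inv_div, LSeries] at h
  apply Complex.ofReal_injective
  push_cast [Complex.ofReal_tsum]
  rw [← h]
  refine tsum_congr fun d => ?_
  rcases eq_or_ne d 0 with rfl | hd
  · simp
  · simp [LSeries.term_of_ne_zero hd]

end ArithmeticFunction

open ArithmeticFunction

theorem card_filter_squarefree_Icc (n : ℕ) :
    (#{x ∈ Icc 1 n | Squarefree x} : ℤ) = ∑ d ∈ Icc 1 n, μ d * (n / d ^ 2 : ℕ) := by
  calc (#{x ∈ Icc 1 n | Squarefree x} : ℤ)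
      = ∑ x ∈ Icc 1 n, ∑ d ∈ Icc 1 n with d ^ 2 ∣ x, μ d := by
        rw [card_filter, Nat.cast_sum]
        refine sum_congr rfl fun x hx => ?_
        rw [sum_moebius_filter_sq_dvd (by grind) (mem_Icc.mp hx).2, Nat.cast_ite,
          Nat.cast_one, Nat.cast_zero]
    _ = ∑ d ∈ Icc 1 n, μ d * #{x ∈ Icc 1 n | d ^ 2 ∣ x} := by
        simp_rw [sum_filter, card_filter, Nat.cast_sum, mul_sum]
        rw [sum_comm]
        simp only [Nat.cast_ite, Nat.cast_one, CharP.cast_eq_zero, mul_ite, mul_one, mul_zero]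
    _ = ∑ d ∈ Icc 1 n, μ d * (n / d ^ 2 : ℕ) := by
        congr! 3 with d
        exact Nat.Ioc_filter_dvd_card_eq_div n (d ^ 2)

theorem card_filter_squarefree_Icc_div_eq_tsum (n : ℕ) :
    (#{x ∈ Icc 1 n | Squarefree x} : ℝ) / n = ∑' d : ℕ, μ d * (((n / d ^ 2 : ℕ) : ℝ) / n) := by
  have hcard := congr(($(card_filter_squarefree_Icc n) : ℝ))
  simp only [Int.cast_natCast, Int.cast_sum, Int.cast_mul] at hcard
  rw [hcard, sum_div, tsum_eq_sum (s := Icc 1 n)]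
  · simp_rw [mul_div_assoc]
  · intro d hd
    rcases Nat.eq_zero_or_pos d with rfl | hd0
    · simp
    · have : n < d ^ 2 := by
        simp only [mem_Icc, not_and, not_le] at hd
        exact (hd hd0).trans_le (Nat.le_self_pow two_ne_zero d)
      simp [Nat.div_eq_of_lt this]

/-- The natural density of squarefree integers is `6 / π²`: the proportion of integers in
`{1, …, n}` that are squarefree tends to `6 / π²`. -/
theorem squarefree_density :
    Tendsto (fun n : ℕ =>
        (((Finset.Icc 1 n).filter fun x => Squarefree x).card : ℝ) / (n : ℝ))
      atTop (𝓝 (6 / π ^ 2)) := by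
  have hlim (d : ℕ) : Tendsto (fun n : ℕ => (μ d : ℝ) * (((n / d ^ 2 : ℕ) : ℝ) / n)) atTop
      (𝓝 ((μ d : ℝ) / d ^ 2)) := by
    convert (Nat.tendsto_cast_div_div_self (d ^ 2)).const_mul (μ d : ℝ) using 2
    push_cast
    ring
  have hbound (n d : ℕ) : ‖(μ d : ℝ) * (((n / d ^ 2 : ℕ) : ℝ) / n)‖ ≤ 1 / (d : ℝ) ^ 2 := by
    rw [norm_mul, norm_div, Real.norm_natCast, Real.norm_natCast, Real.norm_eq_abs, one_div,
      ← one_mul ((d : ℝ) ^ 2)⁻¹]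
    gcongr
    · exact_mod_cast abs_moebius_le_one
    · exact_mod_cast Nat.cast_div_div_self_le n (d ^ 2)
  simp_rw [card_filter_squarefree_Icc_div_eq_tsum, ← tsum_moebius_div_sq]
  exact tendsto_tsum_of_dominated_convergence (Real.summable_one_div_nat_pow.mpr one_lt_two) hlim
    (Eventually.of_forall hbound)
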